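/- arXiv:1209.1050 — 5 statements merged into one kernel-verified Lean document; each statement's English description precedes it below -/
import Mathlib

section
/- If D is a kernel-perfect digraph and L is a list assignment such that |L(v)| ≥ 1 + d⁺(v) for every vertex v of D, then the underlying graph of D is L-colorable (there is a proper coloring f with f(v) ∈ L(v) for all v). -/
open Classical in
private lemma kp_aux {V : Type*} [Fintype V] [DecidableEq V]
    (D : V → V → Prop) [DecidableRel D]
    (hKP : ∀ A : Set V, ∃ F : Set V, F ⊆ A ∧
      (∀ u ∈ F, ∀ v ∈ F, ¬ D u v) ∧
      (∀ v ∈ A, v ∉ F → ∃ u ∈ F, D v u)) :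
    ∀ A : Finset V, ∀ L : V → Finset ℕ,
      (∀ v ∈ A, (A.filter (fun u => D v u)).card + 1 ≤ (L v).card) →
      ∃ f : V → ℕ, (∀ v ∈ A, f v ∈ L v) ∧
        ∀ u ∈ A, ∀ v ∈ A, D u v → f u ≠ f v := by
  intro A
  induction A using Finset.strongInduction with
  | _ A ih =>
    intro L hL
    rcases A.eq_empty_or_nonempty with rfl | ⟨v0, hv0⟩
    · exact ⟨fun _ => 0, by simp, by simp⟩
    · have hLv0 : (L v0).Nonempty := by
        rw [← Finset.card_pos]
        have := hL v0 hv0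
        omega
      obtain ⟨c, hc⟩ := hLv0
      set Ac : Finset V := A.filter (fun v => c ∈ L v) with hAc
      have hv0Ac : v0 ∈ Ac := Finset.mem_filter.2 ⟨hv0, hc⟩
      obtain ⟨F, hFsub, hFind, hFabs⟩ := hKP (↑Ac : Set V)
      set Fs : Finset V := A.filter (fun v => v ∈ F) with hFs
      have hFsA : Fs ⊆ A := Finset.filter_subset _ _
      have hFsF : ∀ v, v ∈ Fs → v ∈ F := fun v hv => (Finset.mem_filter.1 hv).2
      have hFFs : ∀ v, v ∈ F → v ∈ Fs := fun v hv =>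
        Finset.mem_filter.2 ⟨Finset.filter_subset _ _ (by exact_mod_cast hFsub hv), hv⟩
      have hFsne : Fs.Nonempty := by
        by_cases h : v0 ∈ F
        · exact ⟨v0, hFFs _ h⟩
        · obtain ⟨u, hu, _⟩ := hFabs v0 (by exact_mod_cast hv0Ac) h
          exact ⟨u, hFFs _ hu⟩
      set A' : Finset V := A \ Fs with hA'
      have hA'ss : A' ⊂ A := by
        refine Finset.ssubset_iff_of_subset (Finset.sdiff_subset) |>.2 ?_
        obtain ⟨w, hw⟩ := hFsne
        exact ⟨w, hFsA hw, by simp [hA', hw]⟩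
      have hL' : ∀ v ∈ A', (A'.filter (fun u => D v u)).card + 1 ≤ ((L v).erase c).card := by
        intro v hv
        have hvA : v ∈ A := (Finset.mem_sdiff.1 hv).1
        have hvFs : v ∉ Fs := (Finset.mem_sdiff.1 hv).2
        by_cases hvc : c ∈ L v
        · -- v ∈ Ac, has an out-neighbor in F
          have hvAc : v ∈ Ac := Finset.mem_filter.2 ⟨hvA, hvc⟩
          have hvF : v ∉ F := fun h => hvFs (hFFs _ h)
          obtain ⟨u, huF, hDvu⟩ := hFabs v (by exact_mod_cast hvAc) hvF
          have huFs : u ∈ Fs := hFFs _ huF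
          have huA : u ∈ A := hFsA huFs
          have hsub : A'.filter (fun u => D v u) ⊆ (A.filter (fun u => D v u)).erase u := by
            intro x hx
            rcases Finset.mem_filter.1 hx with ⟨hxA', hxD⟩
            rcases Finset.mem_sdiff.1 hxA' with ⟨hxA, hxFs⟩
            exact Finset.mem_erase.2 ⟨fun h => hxFs (h ▸ huFs), Finset.mem_filter.2 ⟨hxA, hxD⟩⟩
          have huMem : u ∈ A.filter (fun u => D v u) := Finset.mem_filter.2 ⟨huA, hDvu⟩
          have h1 : (A'.filter (fun u => D v u)).card ≤
              (A.filter (fun u => D v u)).card - 1 := by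
            have := Finset.card_le_card hsub
            rwa [Finset.card_erase_of_mem huMem] at this
          have h2 : 1 ≤ (A.filter (fun u => D v u)).card :=
            Finset.card_pos.2 ⟨u, huMem⟩
          have h3 := hL v hvA
          have h4 : ((L v).erase c).card = (L v).card - 1 :=
            Finset.card_erase_of_mem hvc
          omega
        · have h4 : (L v).erase c = L v := Finset.erase_eq_of_notMem hvc
          have hsub : A'.filter (fun u => D v u) ⊆ A.filter (fun u => D v u) :=
            Finset.filter_subset_filter _ Finset.sdiff_subset
          have := Finset.card_le_card hsub
          have h3 := hL v hvA
          rw [h4]; omega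
      obtain ⟨f', hf'mem, hf'prop⟩ := ih A' hA'ss (fun v => (L v).erase c) hL'
      refine ⟨fun v => if v ∈ Fs then c else f' v, ?_, ?_⟩
      · intro v hv
        by_cases h : v ∈ Fs
        · simp only [h, if_true]
          have : v ∈ Ac := by exact_mod_cast hFsub (hFsF _ h)
          exact (Finset.mem_filter.1 this).2
        · simp only [h, if_false]
          exact Finset.erase_subset _ _ (hf'mem v (Finset.mem_sdiff.2 ⟨hv, h⟩))
      · intro u hu v hv hD
        by_cases h1 : u ∈ Fs <;> by_cases h2 : v ∈ Fs
        · exact absurd hD (hFind u (hFsF _ h1) v (hFsF _ h2))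
        · simp only [h1, h2, if_true, if_false]
          have := hf'mem v (Finset.mem_sdiff.2 ⟨hv, h2⟩)
          exact fun h => (Finset.mem_erase.1 this).1 h.symm
        · simp only [h1, h2, if_true, if_false]
          have := hf'mem u (Finset.mem_sdiff.2 ⟨hu, h1⟩)
          exact (Finset.mem_erase.1 this).1
        · simp only [h1, h2, if_false]
          exact hf'prop u (Finset.mem_sdiff.2 ⟨hu, h1⟩) v (Finset.mem_sdiff.2 ⟨hv, h2⟩) hD

/-- If `D` is a loopless kernel-perfect digraph and `L` is a list
assignment such that `|L v| ≥ 1 + d⁺(v)` for every vertex `v`, then the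
underlying graph of `D` is `L`-colorable. -/
theorem kernel_perfect_list_colorable {V : Type*} [Fintype V] [DecidableEq V]
    (D : V → V → Prop) [DecidableRel D]
    (hloopless : ∀ v, ¬ D v v)
    (hKP : ∀ A : Set V, ∃ F : Set V, F ⊆ A ∧
      (∀ u ∈ F, ∀ v ∈ F, ¬ D u v) ∧
      (∀ v ∈ A, v ∉ F → ∃ u ∈ F, D v u))
    (L : V → Finset ℕ)
    (hL : ∀ v, (Finset.univ.filter (fun u => D v u)).card + 1 ≤ (L v).card) :
    ∃ f : V → ℕ, (∀ v, f v ∈ L v) ∧ ∀ u v, D u v → f u ≠ f v := by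
  obtain ⟨f, h1, h2⟩ := kp_aux D hKP Finset.univ L (fun v _ => hL v)
  exact ⟨f, fun v => h1 v (Finset.mem_univ v),
    fun u v => h2 u (Finset.mem_univ u) v (Finset.mem_univ v)⟩
end

section
/- Let A be an independent set in a graph G and B = V(G) − A. Let D be the digraph obtained from G by replacing each edge within B by a pair of opposite arcs, and orienting the edges between A and B arbitrarily. Then D is kernel-perfect. -/
/-!
Take, by Zorn's lemma, a maximal semikernel `M` of `D[S]` inside `S \ A`, and add to it the
vertices of `A ∩ S` with no arc into `M`. The result is independent because `A` is, and because
a semikernel sends every out-neighbour back into itself. A vertex `v ∈ S \ A` outside `M` is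
absorbed: either it is adjacent to `M`, hence (arcs outside `A` being symmetric) has an arc into
`M`, or maximality of `M` yields an arc from `v` to some `a ∈ A ∩ S` with no arc back into `M`,
i.e. to a vertex of the kernel.
-/

namespace Relation

variable {V : Type*} (D : V → V → Prop)

def IsIndependent (F : Set V) : Prop :=
  ∀ u ∈ F, ∀ v ∈ F, ¬ D u v

def IsKernelIn (S F : Set V) : Prop :=
  F ⊆ S ∧ IsIndependent D F ∧ ∀ v ∈ S, v ∉ F → ∃ u ∈ F, D v u

def IsSemikernelIn (S M : Set V) : Prop :=
  M ⊆ S ∧ IsIndependent D M ∧ ∀ m ∈ M, ∀ v ∈ S, D m v → ∃ m' ∈ M, D v m'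

variable {D}

theorem isSemikernelIn_empty (S : Set V) : IsSemikernelIn D S ∅ := by
  simp [IsSemikernelIn, IsIndependent]

theorem isSemikernelIn_sUnion {S : Set V} {c : Set (Set V)}
    (hc : ∀ M ∈ c, IsSemikernelIn D S M) (hchain : IsChain (· ⊆ ·) c) :
    IsSemikernelIn D S (⋃₀ c) := by
  refine ⟨Set.sUnion_subset fun M hM => (hc M hM).1, ?_, ?_⟩
  · rintro u ⟨M, hM, hu⟩ v ⟨N, hN, hv⟩
    rcases hchain.total hM hN with h | h
    · exact (hc N hN).2.1 u (h hu) v hv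
    · exact (hc M hM).2.1 u hu v (h hv)
  · rintro m ⟨M, hM, hm⟩ v hv hD
    obtain ⟨m', hm', hD'⟩ := (hc M hM).2.2 m hm v hv hD
    exact ⟨m', ⟨M, hM, hm'⟩, hD'⟩

theorem exists_maximal_isSemikernelIn (S T : Set V) :
    ∃ M, Maximal (fun M => IsSemikernelIn D S M ∧ M ⊆ T) M := by
  refine zorn_subset _ fun c hc hchain => ?_
  rcases c.eq_empty_or_nonempty with rfl | ⟨M₀, hM₀⟩
  · exact ⟨∅, ⟨isSemikernelIn_empty S, Set.empty_subset T⟩, by simp⟩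
  exact ⟨⋃₀ c, ⟨isSemikernelIn_sUnion (fun M hM => (hc hM).1) hchain,
    Set.sUnion_subset fun M hM => (hc hM).2⟩, fun M hM => Set.subset_sUnion_of_mem hM⟩

theorem IsSemikernelIn.insert {S M : Set V} {v : V} (hM : IsSemikernelIn D S M) (hv : v ∈ S)
    (hloop : ¬ D v v) (hout : ∀ m ∈ M, ¬ D v m) (hin : ∀ m ∈ M, ¬ D m v)
    (hback : ∀ w ∈ S, D v w → ∃ m ∈ insert v M, D w m) :
    IsSemikernelIn D S (insert v M) := by
  obtain ⟨hMS, hMind, hMback⟩ := hM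
  refine ⟨Set.insert_subset hv hMS, ?_, ?_⟩
  · rintro u (rfl | hu) w (rfl | hw)
    exacts [hloop, hout w hw, hin u hu, hMind u hu w hw]
  · rintro m (rfl | hm) w hw hD
    · exact hback w hw hD
    · obtain ⟨m', hm', hD'⟩ := hMback m hm w hw hD
      exact ⟨m', Or.inr hm', hD'⟩

section Kernel

variable {A S M : Set V}

def kernelOfSemikernel (D : V → V → Prop) (A S M : Set V) : Set V :=
  M ∪ {a | a ∈ A ∧ a ∈ S ∧ ¬ ∃ m ∈ M, D a m}

theorem isIndependent_kernelOfSemikernel (hA : IsIndependent D A) (hM : IsSemikernelIn D S M) :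
    IsIndependent D (kernelOfSemikernel D A S M) := by
  rintro u (hu | ⟨huA, -, hu⟩) v (hv | ⟨hvA, hvS, hv⟩) hD
  · exact hM.2.1 u hu v hv hD
  · exact hv (hM.2.2 u hu v hvS hD)
  · exact hu ⟨v, hv, hD⟩
  · exact hA u huA v hvA hD

theorem absorbs_kernelOfSemikernel
    (hsymm : ∀ u v, u ∉ A → v ∉ A → D u v → D v u) (hirrefl : ∀ v, v ∉ A → ¬ D v v)
    (hM : Maximal (fun M => IsSemikernelIn D S M ∧ M ⊆ S \ A) M)
    {v : V} (hvS : v ∈ S) (hvA : v ∉ A) (hvM : v ∉ M) :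
    ∃ u ∈ kernelOfSemikernel D A S M, D v u := by
  have hMA : ∀ m ∈ M, m ∉ A := fun m hm => (hM.1.2 hm).2
  by_contra hnone
  push Not at hnone
  have hout : ∀ m ∈ M, ¬ D v m := fun m hm => hnone m (Or.inl hm)
  have hin : ∀ m ∈ M, ¬ D m v := fun m hm hD => hout m hm (hsymm m v (hMA m hm) hvA hD)
  have hback : ∀ w ∈ S, D v w → ∃ m ∈ insert v M, D w m := by
    intro w hwS hD
    by_cases hwA : w ∈ A
    · by_contra hno
      exact hnone w (Or.inr ⟨hwA, hwS, fun ⟨m, hm, hD'⟩ => hno ⟨m, Or.inr hm, hD'⟩⟩) hD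
    · exact ⟨v, Set.mem_insert v M, hsymm v w hvA hwA hD⟩
  have hins : IsSemikernelIn D S (insert v M) :=
    hM.1.1.insert hvS (hirrefl v hvA) hout hin hback
  exact hvM (hM.2 ⟨hins, Set.insert_subset ⟨hvS, hvA⟩ hM.1.2⟩ (Set.subset_insert v M)
    (Set.mem_insert v M))

theorem isKernelIn_kernelOfSemikernel (hA : IsIndependent D A)
    (hsymm : ∀ u v, u ∉ A → v ∉ A → D u v → D v u) (hirrefl : ∀ v, v ∉ A → ¬ D v v)
    (hM : Maximal (fun M => IsSemikernelIn D S M ∧ M ⊆ S \ A) M) :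
    IsKernelIn D S (kernelOfSemikernel D A S M) := by
  refine ⟨Set.union_subset (fun m hm => (hM.1.2 hm).1) fun a ha => ha.2.1,
    isIndependent_kernelOfSemikernel hA hM.1.1, fun v hvS hvF => ?_⟩
  by_cases hvA : v ∈ A
  · obtain ⟨m, hm, hD⟩ : ∃ m ∈ M, D v m := by
      by_contra h
      exact hvF (Or.inr ⟨hvA, hvS, h⟩)
    exact ⟨m, Or.inl hm, hD⟩
  · exact absorbs_kernelOfSemikernel hsymm hirrefl hM hvS hvA fun h => hvF (Or.inl h)

end Kernel

theorem exists_isKernelIn_of_symmetric_off_independent {A : Set V} (hA : IsIndependent D A)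
    (hsymm : ∀ u v, u ∉ A → v ∉ A → D u v → D v u) (hirrefl : ∀ v, v ∉ A → ¬ D v v)
    (S : Set V) : ∃ F, IsKernelIn D S F := by
  obtain ⟨M, hM⟩ := exists_maximal_isSemikernelIn (D := D) S (S \ A)
  exact ⟨_, isKernelIn_kernelOfSemikernel hA hsymm hirrefl hM⟩

end Relation

theorem bipartite_like_orientation_kernel_perfect_general {V : Type*}
    (G : SimpleGraph V) (A : Set V)
    (hA : ∀ u ∈ A, ∀ v ∈ A, ¬ G.Adj u v)
    (D : V → V → Prop)
    (hsub : ∀ u v, D u v → G.Adj u v)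
    (hBB : ∀ u v, u ∉ A → v ∉ A → (D u v ↔ G.Adj u v)) :
    ∀ S : Set V, ∃ F : Set V, F ⊆ S ∧
      (∀ u ∈ F, ∀ v ∈ F, ¬ D u v) ∧
      (∀ v ∈ S, v ∉ F → ∃ u ∈ F, D v u) := by
  have hAind : Relation.IsIndependent D A := fun u hu v hv hD => hA u hu v hv (hsub u v hD)
  have hsymm : ∀ u v, u ∉ A → v ∉ A → D u v → D v u := fun u v hu hv hD =>
    (hBB v u hv hu).2 (hsub u v hD).symm
  have hirrefl : ∀ v, v ∉ A → ¬ D v v := fun v _ hD => G.loopless.irrefl v (hsub v v hD)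
  exact Relation.exists_isKernelIn_of_symmetric_off_independent hAind hsymm hirrefl

/-- If `A` is an independent set in a graph `G`, and `D` is the
digraph obtained from `G` by replacing each edge within `B = V(G) − A` by a
pair of opposite arcs and orienting each edge between `A` and `B` arbitrarily,
then `D` is kernel-perfect. -/
theorem bipartite_like_orientation_kernel_perfect {V : Type*}
    (G : SimpleGraph V) (A : Set V)
    (hA : ∀ u ∈ A, ∀ v ∈ A, ¬ G.Adj u v)
    (D : V → V → Prop)
    (hsub : ∀ u v, D u v → G.Adj u v)
    (hBB : ∀ u v, u ∉ A → v ∉ A → (D u v ↔ G.Adj u v))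
    (hAB : ∀ u v, G.Adj u v → ((u ∈ A ∧ v ∉ A) ∨ (u ∉ A ∧ v ∈ A)) →
      (D u v ∨ D v u) ∧ ¬ (D u v ∧ D v u)) :
    ∀ S : Set V, ∃ F : Set V, F ⊆ S ∧
      (∀ u ∈ F, ∀ v ∈ F, ¬ D u v) ∧
      (∀ v ∈ S, v ∉ F → ∃ u ∈ F, D v u) :=
  bipartite_like_orientation_kernel_perfect_general G A hA D hsub hBB
end

section
/- Let G be a k-critical graph (k ≥ 4), and let A, B be disjoint vertex subsets such that at least one of A, B is independent, every vertex of A has degree k−1 in G, every vertex of B has degree k in G, and A ∪ B is nonempty. Then the bipartite graph G(A,B) consisting of the edges of G joining A to B has a vertex of degree at most 2. -/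
/-!
Suppose every vertex of `A` has at least three neighbours in `B` and vice versa, and let
`T = A ∪ B`. By criticality, `G` minus the edges inside `T` has a `(k-1)`-colouring `φ`; a vertex
`v ∈ T` may still use every colour not taken by `φ` on its neighbours outside `T`, which leaves it
at least `deg_T v` colours if `v ∈ A` and `deg_T v - 1` if `v ∈ B`. Orient `G[T]` with the edges
inside `A` or `B` both ways and, by Hall's theorem, the `A`–`B` edges so that every vertex of `A`
has one and every vertex of `B` two in-edges: then every out-degree is smaller than the number of
free colours. As one of `A`, `B` is independent, every induced subdigraph has a kernel, so the
kernel method of Bondy, Boppana and Siegel colours `T` from these lists, and `G` would be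
`(k-1)`-colourable.
-/

/-- A graph is `k`-critical if its chromatic number is `k` but every proper
subgraph is `(k−1)`-colorable. -/
def IsCritical {V : Type*} (G : SimpleGraph V) (k : ℕ) : Prop :=
  G.chromaticNumber = (k : ℕ∞) ∧
    ∀ H : SimpleGraph V, H ≤ G → H ≠ G → H.chromaticNumber ≤ ((k - 1 : ℕ) : ℕ∞)

open Finset

section Kernel

variable {V : Type*} (r : V → V → Prop)

structure IsKernel (U K : Finset V) : Prop where
  subset : K ⊆ U
  independent : ∀ u ∈ K, ∀ v ∈ K, ¬ r u v
  absorbing : ∀ v ∈ U, v ∉ K → ∃ u ∈ K, r v u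

variable {r}

theorem exists_isKernel (X : Finset V) (hirr : ∀ v, ¬ r v v)
    (hsymm : ∀ u ∈ X, ∀ v ∈ X, r u v → r v u) (hX : ∀ u ∉ X, ∀ v ∉ X, ¬ r u v)
    (U : Finset V) : ∃ K, IsKernel r U K := by
  classical
  induction U using Finset.strongInduction with
  | _ U ih =>
  -- either `U \ X` is a kernel, or some `x ∈ U ∩ X` with no arc into `U \ X` extends a kernel
  -- of `U` minus `x` and its in-neighbours
  by_cases hout : ∀ x ∈ U ∩ X, ∃ y ∈ U \ X, r x y
  · refine ⟨U \ X, ⟨sdiff_subset, fun u hu v hv => ?_, fun v hv hvK => ?_⟩⟩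
    · exact hX u (mem_sdiff.1 hu).2 v (mem_sdiff.1 hv).2
    · exact hout v (mem_inter.2 ⟨hv, by simpa [hv] using hvK⟩)
  push Not at hout
  obtain ⟨x, hx, hxout⟩ := hout
  obtain ⟨hxU, hxX⟩ := mem_inter.1 hx
  obtain ⟨K, hK⟩ := ih ((U.erase x).filter (¬ r · x))
    ((filter_subset _ _).trans_ssubset (erase_ssubset hxU))
  have hKU : K ⊆ U := hK.subset.trans ((filter_subset _ _).trans (erase_subset _ _))
  have hKx (v : V) (hv : v ∈ K) : ¬ r v x := (mem_filter.1 (hK.subset hv)).2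
  refine ⟨insert x K, ⟨insert_subset hxU hKU, ?_, fun v hv hvK => ?_⟩⟩
  · have hxK (v : V) (hv : v ∈ K) : ¬ r x v := fun h => by
      by_cases hvX : v ∈ X
      · exact hKx v hv (hsymm x hxX v hvX h)
      · exact hxout v (mem_sdiff.2 ⟨hKU hv, hvX⟩) h
    simp only [mem_insert, forall_eq_or_imp]
    exact ⟨⟨hirr x, hxK⟩, fun u hu => ⟨hKx u hu, hK.independent u hu⟩⟩
  · rw [mem_insert, not_or] at hvK
    by_cases hvx : r v x
    · exact ⟨x, mem_insert_self _ _, hvx⟩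
    · obtain ⟨u, hu, hvu⟩ :=
        hK.absorbing v (mem_filter.2 ⟨mem_erase.2 ⟨hvK.1, hv⟩, hvx⟩) hvK.2
      exact ⟨u, mem_insert_of_mem hu, hvu⟩

theorem exists_listColoring_of_forall_isKernel {α : Type*} [DecidableEq α] [DecidableRel r]
    (U : Finset V) (hU : ∀ W ⊆ U, ∃ K, IsKernel r W K) (L : V → Finset α)
    (hL : ∀ v ∈ U, #{u ∈ U | r v u} < #(L v)) (d : V → α) :
    ∃ c : V → α, (∀ v ∉ U, c v = d v) ∧ (∀ v ∈ U, c v ∈ L v) ∧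
      ∀ u ∈ U, ∀ v ∈ U, r u v → c u ≠ c v := by
  classical
  induction U using Finset.strongInduction generalizing L with
  | _ U ih =>
  obtain rfl | ⟨v₀, hv₀⟩ := U.eq_empty_or_nonempty
  · exact ⟨d, fun _ _ => rfl, by simp, by simp⟩
  obtain ⟨γ, hγ⟩ := card_pos.1 ((Nat.zero_le _).trans_lt (hL v₀ hv₀))
  -- colour with `γ` a kernel of the vertices whose list contains `γ`, and recurse on the rest
  obtain ⟨K, hK⟩ := hU {v ∈ U | γ ∈ L v} (filter_subset _ _)
  have hKU : K ⊆ U := hK.subset.trans (filter_subset _ _)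
  have hKγ (v : V) (hv : v ∈ K) : γ ∈ L v := (mem_filter.1 (hK.subset hv)).2
  have hKne : K.Nonempty := by
    by_contra h
    obtain ⟨u, hu, -⟩ := hK.absorbing v₀ (mem_filter.2 ⟨hv₀, hγ⟩) (by simp_all)
    exact h ⟨u, hu⟩
  have hL' (v : V) (hv : v ∈ U \ K) : #{u ∈ U \ K | r v u} < #((L v).erase γ) := by
    obtain ⟨hvU, hvK⟩ := mem_sdiff.1 hv
    have hsub : {u ∈ U \ K | r v u} ⊆ {u ∈ U | r v u} := filter_subset_filter _ sdiff_subset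
    by_cases hvγ : γ ∈ L v
    · obtain ⟨u, huK, hvu⟩ := hK.absorbing v (mem_filter.2 ⟨hvU, hvγ⟩) hvK
      have hlt : #{u ∈ U \ K | r v u} < #{u ∈ U | r v u} := card_lt_card ⟨hsub, fun h =>
        (mem_sdiff.1 (mem_filter.1 (h (mem_filter.2 ⟨hKU huK, hvu⟩))).1).2 huK⟩
      rw [card_erase_of_mem hvγ]
      have := hL v hvU
      omega
    · rw [erase_eq_of_notMem hvγ]
      exact (card_le_card hsub).trans_lt (hL v hvU)
  obtain ⟨c, hcd, hcL, hc⟩ := ih (U \ K) (sdiff_ssubset hKU hKne)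
    (fun W hW => hU W (hW.trans sdiff_subset)) (fun v => (L v).erase γ) hL'
  refine ⟨fun v => if v ∈ K then γ else c v, fun v hv => ?_, fun v hv => ?_, ?_⟩
  · simp [show v ∉ K from fun h => hv (hKU h), hcd v (fun h => hv (mem_sdiff.1 h).1)]
  · by_cases hvK : v ∈ K
    · simpa [hvK] using hKγ v hvK
    · simpa [hvK] using mem_of_mem_erase (hcL v (mem_sdiff.2 ⟨hv, hvK⟩))
  · intro u hu v hv huv
    by_cases huK : u ∈ K <;> by_cases hvK : v ∈ K <;> simp only [huK, hvK, if_true, if_false]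
    · exact absurd huv (hK.independent u huK v hvK)
    · exact (ne_of_mem_erase (hcL v (mem_sdiff.2 ⟨hv, hvK⟩))).symm
    · exact ne_of_mem_erase (hcL u (mem_sdiff.2 ⟨hu, huK⟩))
    · exact hc u (mem_sdiff.2 ⟨hu, huK⟩) v (mem_sdiff.2 ⟨hv, hvK⟩) huv

end Kernel

theorem Finset.mul_card_le_card_biUnion {ι α : Type*} [DecidableEq α] {s : Finset ι}
    {t : ι → Finset α} {n : ℕ} (hdisj : (s : Set ι).PairwiseDisjoint t)
    (ht : ∀ i ∈ s, n ≤ #(t i)) : n * #s ≤ #(s.biUnion t) := by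
  rw [card_biUnion hdisj, mul_comm, ← smul_eq_mul]
  exact card_nsmul_le_sum s _ n ht

/-- `M` collects the edges to be oriented from `B` to `A`. Hall's theorem matches each `a ∈ A`
to one of its edges and each `b ∈ B` to two, all distinct; the edges matched to `A` form `M`. -/
theorem exists_bipartite_orientation {α β : Type*} [DecidableEq α] [DecidableEq β]
    (R : α → β → Prop) [DecidableRel R] (A : Finset α) (B : Finset β)
    (hA : ∀ a ∈ A, 3 ≤ #{b ∈ B | R a b}) (hB : ∀ b ∈ B, 3 ≤ #{a ∈ A | R a b}) :
    ∃ M : Finset (α × β), (∀ a ∈ A, ∃ b ∈ B, R a b ∧ (a, b) ∈ M) ∧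
      ∀ b ∈ B, 2 ≤ #{a ∈ A | R a b ∧ (a, b) ∉ M} := by
  let t : A ⊕ (B × Fin 2) → Finset (α × β)
    | .inl a => {a.1} ×ˢ {b ∈ B | R a b}
    | .inr (b, _) => {a ∈ A | R a b} ×ˢ {b.1}
  have hall (s : Finset (A ⊕ (B × Fin 2))) : #s ≤ #(s.biUnion t) := by
    have hleft : 3 * #s.toLeft ≤ #(s.biUnion t) := by
      calc 3 * #s.toLeft ≤ #(s.toLeft.biUnion fun a => t (.inl a)) := by
            refine mul_card_le_card_biUnion (fun a _ a' _ h => ?_)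
              fun a _ => by simpa [t] using hA a a.2
            exact disjoint_product.2 (.inl (disjoint_singleton.2 (Subtype.val_injective.ne h)))
        _ ≤ #(s.biUnion t) := card_le_card fun p => by
            simp only [mem_biUnion, mem_toLeft]
            exact fun ⟨a, ha, hp⟩ => ⟨.inl a, ha, hp⟩
    have hright : 3 * #(s.toRight.image Prod.fst) ≤ #(s.biUnion t) := by
      calc 3 * #(s.toRight.image Prod.fst)
          ≤ #((s.toRight.image Prod.fst).biUnion fun b => t (.inr (b, 0))) := by
            refine mul_card_le_card_biUnion (fun b _ b' _ h => ?_)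
              fun b _ => by simpa [t] using hB b b.2
            exact disjoint_product.2 (.inr (disjoint_singleton.2 (Subtype.val_injective.ne h)))
        _ ≤ #(s.biUnion t) := card_le_card fun p => by
            simp only [mem_biUnion, mem_image, mem_toRight]
            exact fun ⟨_, ⟨⟨b, i⟩, hb, rfl⟩, hp⟩ => ⟨.inr (b, i), hb, hp⟩
    have hpairs : #s.toRight ≤ #(s.toRight.image Prod.fst) * 2 := by
      calc #s.toRight ≤ #(s.toRight.image Prod.fst ×ˢ (univ : Finset (Fin 2))) :=
            card_le_card fun p hp => mem_product.2 ⟨mem_image_of_mem _ hp, mem_univ _⟩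
        _ = #(s.toRight.image Prod.fst) * 2 := by simp
    have := card_toLeft_add_card_toRight (u := s)
    omega
  obtain ⟨f, hf, hft⟩ := (all_card_le_biUnion_card_iff_exists_injective t).1 hall
  refine ⟨univ.image (f ∘ .inl), fun a ha => ?_, fun b hb => ?_⟩
  · obtain ⟨ha', hb⟩ := mem_product.1 (hft (.inl ⟨a, ha⟩))
    obtain ⟨hbB, hab⟩ := mem_filter.1 hb
    refine ⟨_, hbB, hab, mem_image.2 ⟨⟨a, ha⟩, mem_univ _, ?_⟩⟩
    exact Prod.ext (mem_singleton.1 ha') rfl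
  · set a : Fin 2 → α := fun i => (f (.inr (⟨b, hb⟩, i))).1
    have hfa (i : Fin 2) : f (.inr (⟨b, hb⟩, i)) = (a i, b) :=
      Prod.ext rfl (mem_singleton.1 (mem_product.1 (hft (.inr (⟨b, hb⟩, i)))).2)
    have hmem (i : Fin 2) : a i ∈ {a ∈ A | R a b ∧ (a, b) ∉ univ.image (f ∘ .inl)} := by
      obtain ⟨haA, hab⟩ := mem_filter.1 (mem_product.1 (hft (.inr (⟨b, hb⟩, i)))).1
      refine mem_filter.2 ⟨haA, hab, fun hM => ?_⟩
      obtain ⟨a', -, h'⟩ := mem_image.1 hM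
      exact Sum.inl_ne_inr (hf (h'.trans (hfa i).symm))
    have hne : a 0 ≠ a 1 := fun h => by
      have := @hf (.inr (⟨b, hb⟩, 0)) (.inr (⟨b, hb⟩, 1)) (by rw [hfa, hfa, h])
      simp at this
    calc 2 = #{a 0, a 1} := (card_pair hne).symm
      _ ≤ _ := card_le_card (insert_subset (hmem 0) (singleton_subset_iff.2 (hmem 1)))

namespace SimpleGraph

variable {V : Type*} (G : SimpleGraph V)

theorem colorable_of_forall_isKernel [Fintype V] [DecidableEq V] [DecidableRel G.Adj] {n : ℕ}
    (T : Finset V) (hcol : (G.deleteEdges (T : Set V).sym2).Colorable n)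
    (r : V → V → Prop) [DecidableRel r]
    (horient : ∀ u ∈ T, ∀ v ∈ T, G.Adj u v → r u v ∨ r v u)
    (hker : ∀ W ⊆ T, ∃ K, IsKernel r W K)
    (hdeg : ∀ v ∈ T, #{u ∈ T | r v u} + #(G.neighborFinset v \ T) < n) : G.Colorable n := by
  obtain ⟨φ⟩ := hcol
  let L (v : V) : Finset (Fin n) := univ \ (G.neighborFinset v \ T).image φ
  have hL (v : V) (hv : v ∈ T) : #{u ∈ T | r v u} < #(L v) := by
    change _ < #(univ \ _)
    have h1 := card_le_card_sdiff_add_card (s := univ) (t := (G.neighborFinset v \ T).image φ)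
    have h2 := card_image_le (s := G.neighborFinset v \ T) (f := φ)
    have := hdeg v hv
    rw [card_univ, Fintype.card_fin] at h1
    omega
  have hLφ {u v : V} (hu : u ∈ T) (hv : v ∉ T) (huv : G.Adj u v) {c : Fin n} (hc : c ∈ L u) :
      c ≠ φ v := fun h => (mem_sdiff.1 hc).2 (mem_image.2 ⟨v, by simp [huv, hv], h.symm⟩)
  obtain ⟨c, hcφ, hcL, hc⟩ := exists_listColoring_of_forall_isKernel T hker L hL φ
  refine ⟨Coloring.mk c fun {u v} huv => ?_⟩
  by_cases hu : u ∈ T <;> by_cases hv : v ∈ T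
  · rcases horient u hu v hv huv with h | h
    exacts [hc u hu v hv h, (hc v hv u hu h).symm]
  · rw [hcφ v hv]
    exact hLφ hu hv huv (hcL u hu)
  · rw [hcφ u hu]
    exact (hLφ hv hu huv.symm (hcL v hv)).symm
  · rw [hcφ u hu, hcφ v hv]
    exact φ.valid (by simp [huv, hu])

theorem card_filter_add_card_sdiff_add_card_le_degree [Fintype V] [DecidableEq V]
    [DecidableRel G.Adj] {r : V → V → Prop} [DecidableRel r] {T S : Finset V} {v : V}
    (hr : ∀ w, r v w → G.Adj v w) (hST : S ⊆ T) (hS : ∀ w ∈ S, G.Adj v w ∧ ¬ r v w) :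
    #{w ∈ T | r v w} + #(G.neighborFinset v \ T) + #S ≤ G.degree v := by
  have hdisj : Disjoint {w ∈ T | r v w} S :=
    Finset.disjoint_left.2 fun w hw hwS => (hS w hwS).2 (mem_filter.1 hw).2
  have hsub : {w ∈ T | r v w} ∪ S ⊆ G.neighborFinset v ∩ T := by
    intro w hw
    rw [mem_inter, mem_neighborFinset]
    rcases mem_union.1 hw with hw | hw
    · exact ⟨hr w (mem_filter.1 hw).2, (mem_filter.1 hw).1⟩
    · exact ⟨(hS w hw).1, hST hw⟩
  have := card_le_card hsub
  rw [card_union_of_disjoint hdisj] at this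
  rw [← card_neighborFinset_eq_degree, ← card_sdiff_add_card_inter (G.neighborFinset v) T]
  omega

def orientCross (A B : Finset V) (M : Finset (V × V)) (u v : V) : Prop :=
  G.Adj u v ∧ (u ∈ A ∧ v ∈ A ∨ u ∈ B ∧ v ∈ B ∨
    u ∈ A ∧ v ∈ B ∧ (u, v) ∉ M ∨ u ∈ B ∧ v ∈ A ∧ (v, u) ∈ M)

instance [DecidableEq V] [DecidableRel G.Adj] (A B : Finset V) (M : Finset (V × V)) :
    DecidableRel (G.orientCross A B M) := fun _ _ => by unfold orientCross; infer_instance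

variable {G} {A B : Finset V} {M : Finset (V × V)}

theorem orientCross_or_orientCross [DecidableEq V] {u v : V} (hu : u ∈ A ∪ B)
    (hv : v ∈ A ∪ B) (huv : G.Adj u v) :
    G.orientCross A B M u v ∨ G.orientCross A B M v u := by
  rw [mem_union] at hu hv
  unfold orientCross
  by_cases (u, v) ∈ M <;> by_cases (v, u) ∈ M <;> tauto

theorem exists_isKernel_orientCross
    (hind : (∀ u ∈ A, ∀ v ∈ A, ¬ G.Adj u v) ∨ (∀ u ∈ B, ∀ v ∈ B, ¬ G.Adj u v))
    (U : Finset V) : ∃ K, IsKernel (G.orientCross A B M) U K := by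
  have hirr (v : V) : ¬ G.orientCross A B M v v := fun h => G.irrefl h.1
  rcases hind with hA | hB
  · refine exists_isKernel B hirr (fun u hu v hv h => ⟨h.1.symm, .inr (.inl ⟨hv, hu⟩)⟩)
      (fun u hu v hv h => ?_) U
    rcases h with ⟨huv, ⟨hu', hv'⟩ | h | h | h⟩
    exacts [hA u hu' v hv' huv, hu h.1, hv h.2.1, hu h.1]
  · refine exists_isKernel A hirr (fun u hu v hv h => ⟨h.1.symm, .inl ⟨hv, hu⟩⟩)
      (fun u hu v hv h => ?_) U
    rcases h with ⟨huv, h | ⟨hu', hv'⟩ | h | h⟩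
    exacts [hu h.1, hB u hu' v hv' huv, hu h.1, hv h.2.1]

theorem not_orientCross_of_mem (hdisj : Disjoint A B) {a b : V} (ha : a ∈ A) (hb : b ∈ B)
    (h : (a, b) ∈ M) : ¬ G.orientCross A B M a b := by
  have := Finset.disjoint_left.1 hdisj
  unfold orientCross
  tauto

theorem not_orientCross_of_notMem (hdisj : Disjoint A B) {a b : V} (ha : a ∈ A) (hb : b ∈ B)
    (h : (a, b) ∉ M) : ¬ G.orientCross A B M b a := by
  have := Finset.disjoint_left.1 hdisj
  unfold orientCross
  tauto

theorem card_orientCross_add_card_sdiff_add_one_le_degree [Fintype V] [DecidableEq V]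
    [DecidableRel G.Adj] (hdisj : Disjoint A B) {a b : V} (ha : a ∈ A) (hb : b ∈ B)
    (hab : G.Adj a b) (habM : (a, b) ∈ M) :
    #{w ∈ A ∪ B | G.orientCross A B M a w} + #(G.neighborFinset a \ (A ∪ B)) + 1 ≤
      G.degree a :=
  G.card_filter_add_card_sdiff_add_card_le_degree (S := {b}) (fun _ h => h.1)
    (singleton_subset_iff.2 (mem_union_right A hb))
    (by simpa using ⟨hab, not_orientCross_of_mem hdisj ha hb habM⟩)

theorem card_orientCross_add_card_sdiff_add_card_le_degree [Fintype V] [DecidableEq V]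
    [DecidableRel G.Adj] (hdisj : Disjoint A B) {b : V} (hb : b ∈ B) :
    #{w ∈ A ∪ B | G.orientCross A B M b w} + #(G.neighborFinset b \ (A ∪ B)) +
      #{a ∈ A | G.Adj a b ∧ (a, b) ∉ M} ≤ G.degree b :=
  G.card_filter_add_card_sdiff_add_card_le_degree (fun _ h => h.1)
    ((filter_subset _ _).trans subset_union_left) fun a ha => by
      obtain ⟨haA, hab, habM⟩ := mem_filter.1 ha
      exact ⟨hab.symm, not_orientCross_of_notMem hdisj haA hb habM⟩

end SimpleGraph

namespace IsCritical

variable {V : Type*} {G : SimpleGraph V} {k : ℕ}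

theorem colorable_deleteEdges (hG : IsCritical G k) {s : Set (Sym2 V)} {u v : V}
    (huv : G.Adj u v) (hs : s(u, v) ∈ s) : (G.deleteEdges s).Colorable (k - 1) := by
  refine SimpleGraph.chromaticNumber_le_iff_colorable.1 (hG.2 _ (G.deleteEdges_le s) fun h => ?_)
  exact (SimpleGraph.deleteEdges_adj.1 (h ▸ huv)).2 hs

theorem not_colorable (hG : IsCritical G k) {u v : V} (huv : G.Adj u v) :
    ¬ G.Colorable (k - 1) := fun h => by
  have h1 := h.chromaticNumber_le
  have h2 := G.two_le_chromaticNumber_of_adj huv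
  rw [hG.1] at h1 h2
  norm_cast at h1 h2
  omega

end IsCritical

theorem bipartite_min_degree_general {V : Type*} [Fintype V] [DecidableEq V]
    (G : SimpleGraph V) [DecidableRel G.Adj] (k : ℕ)
    (hcrit : IsCritical G k) (A B : Finset V) (hdisj : Disjoint A B)
    (hind : (∀ u ∈ A, ∀ v ∈ A, ¬ G.Adj u v) ∨ (∀ u ∈ B, ∀ v ∈ B, ¬ G.Adj u v))
    (hA : ∀ a ∈ A, G.degree a = k - 1) (hB : ∀ b ∈ B, G.degree b = k)
    (hne : (A ∪ B).Nonempty) :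
    (∃ a ∈ A, (B.filter (fun b => G.Adj a b)).card ≤ 2) ∨
      (∃ b ∈ B, (A.filter (fun a => G.Adj b a)).card ≤ 2) := by
  by_contra! h
  obtain ⟨hA3, hB3⟩ := h
  obtain ⟨u, hu, w, hw, huw⟩ : ∃ u ∈ A ∪ B, ∃ w ∈ A ∪ B, G.Adj u w := by
    obtain ⟨v, hv⟩ := hne
    rcases mem_union.1 hv with hvA | hvB
    · obtain ⟨w, hw⟩ := card_pos.1 (two_pos.trans (hA3 v hvA))
      exact ⟨v, hv, w, mem_union_right _ (mem_filter.1 hw).1, (mem_filter.1 hw).2⟩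
    · obtain ⟨w, hw⟩ := card_pos.1 (two_pos.trans (hB3 v hvB))
      exact ⟨v, hv, w, mem_union_left _ (mem_filter.1 hw).1, (mem_filter.1 hw).2⟩
  obtain ⟨M, hMA, hMB⟩ := exists_bipartite_orientation G.Adj A B hA3
    fun b hb => by simpa only [G.adj_comm b] using Nat.succ_le_of_lt (hB3 b hb)
  refine hcrit.not_colorable huw <| G.colorable_of_forall_isKernel (A ∪ B)
    (hcrit.colorable_deleteEdges huw (Set.mk_mem_sym2_iff.2 ⟨hu, hw⟩)) (G.orientCross A B M)
    (fun u hu v hv => SimpleGraph.orientCross_or_orientCross hu hv)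
    (fun W _ => SimpleGraph.exists_isKernel_orientCross hind W) fun v hv => ?_
  rcases mem_union.1 hv with hvA | hvB
  · obtain ⟨b, hb, hvb, hvbM⟩ := hMA v hvA
    have := SimpleGraph.card_orientCross_add_card_sdiff_add_one_le_degree hdisj hvA hb hvb hvbM
    rw [hA v hvA] at this
    omega
  · have hdeg := SimpleGraph.card_orientCross_add_card_sdiff_add_card_le_degree (G := G) (M := M)
      hdisj hvB
    rw [hB v hvB] at hdeg
    have := hMB v hvB
    omega

/-- In a `k`-critical graph (`k ≥ 4`), if `A`, `B` are disjoint
vertex sets, one of them independent, all of `A` of degree `k−1`, all of `B`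
of degree `k`, and `A ∪ B ≠ ∅`, then the bipartite graph `G(A,B)` has a vertex
of degree at most `2`. -/
theorem bipartite_min_degree {V : Type*} [Fintype V] [DecidableEq V]
    (G : SimpleGraph V) [DecidableRel G.Adj] (k : ℕ) (hk : 4 ≤ k)
    (hcrit : IsCritical G k) (A B : Finset V) (hdisj : Disjoint A B)
    (hind : (∀ u ∈ A, ∀ v ∈ A, ¬ G.Adj u v) ∨ (∀ u ∈ B, ∀ v ∈ B, ¬ G.Adj u v))
    (hA : ∀ a ∈ A, G.degree a = k - 1) (hB : ∀ b ∈ B, G.degree b = k)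
    (hne : (A ∪ B).Nonempty) :
    (∃ a ∈ A, (B.filter (fun b => G.Adj a b)).card ≤ 2) ∨
      (∃ b ∈ B, (A.filter (fun a => G.Adj b a)).card ≤ 2) :=
  bipartite_min_degree_general G k hcrit A B hdisj hind hA hB hne
end

section
/- Suppose G is a graph, R ⊂ V(G), φ is a proper (k−1)-coloring of G[R], and G is not (k−1)-colorable. Let Y(G,R,φ) be the graph on vertex set (V(G) − R) ∪ {x₁,…,x_{k−1}} (new vertices) where Y restricted to V(G) − R equals G − R, the xᵢ are pairwise adjacent, and xᵢ is adjacent to exactly those vertices of V(G) − R having a neighbor v ∈ R with φ(v) = i. Then χ(Y(G,R,φ)) ≥ k. -/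
/-- If `φ` is a proper `(k−1)`-coloring of `G[R]` (with
`R ⊊ V(G)`) and `G` is not `(k−1)`-colorable, then the graph `Y(G,R,φ)`
(obtained from `G − R` by adding a clique `x₁,…,x_{k−1}` where `xᵢ` is joined
to the vertices outside `R` having a neighbor of color `i` in `R`) has
chromatic number at least `k`. -/
theorem chromatic_of_Y {V : Type*} (G : SimpleGraph V) (k : ℕ) (R : Set V)
    (hR : R ≠ Set.univ) (φ : V → Fin (k - 1))
    (hφ : ∀ u ∈ R, ∀ v ∈ R, G.Adj u v → φ u ≠ φ v)
    (hG : ¬ G.Colorable (k - 1))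
    (Y : SimpleGraph ((Rᶜ : Set V) ⊕ Fin (k - 1)))
    (hYvv : ∀ u v : (Rᶜ : Set V),
      Y.Adj (Sum.inl u) (Sum.inl v) ↔ G.Adj u v)
    (hYvx : ∀ (u : (Rᶜ : Set V)) (i : Fin (k - 1)),
      Y.Adj (Sum.inl u) (Sum.inr i) ↔ ∃ v ∈ R, G.Adj u v ∧ φ v = i)
    (hYxx : ∀ i j : Fin (k - 1), Y.Adj (Sum.inr i) (Sum.inr j) ↔ i ≠ j) :
    (k : ℕ∞) ≤ Y.chromaticNumber := by
  rcases Nat.eq_zero_or_pos k with hk | hk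
  · simp [hk]
  have key : ¬ Y.Colorable (k - 1) := by
    rintro ⟨C⟩
    apply hG
    have hinj : Function.Injective (fun i : Fin (k-1) => C (Sum.inr i)) := by
      intro i j hij
      by_contra h
      exact C.valid ((hYxx i j).mpr h) hij
    have hbij := (Finite.injective_iff_bijective).mp hinj
    let σ : Fin (k-1) ≃ Fin (k-1) := Equiv.ofBijective _ hbij
    classical
    refine ⟨⟨fun v => if h : v ∈ R then φ v else σ.symm (C (Sum.inl ⟨v, h⟩)), ?_⟩⟩
    intro u v huv
    by_cases hu : u ∈ R <;> by_cases hv : v ∈ R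
    · simp only [dif_pos hu, dif_pos hv]
      exact hφ u hu v hv huv
    · simp only [dif_pos hu, dif_neg hv]
      intro h
      have hadj : Y.Adj (Sum.inl ⟨v, hv⟩) (Sum.inr (φ u)) :=
        (hYvx ⟨v, hv⟩ (φ u)).mpr ⟨u, hu, huv.symm, rfl⟩
      have hC : C (Sum.inl ⟨v, hv⟩) ≠ C (Sum.inr (φ u)) := C.valid hadj
      have h2 : σ (φ u) = C (Sum.inl ⟨v, hv⟩) := by rw [h, Equiv.apply_symm_apply]
      exact hC h2.symm
    · simp only [dif_neg hu, dif_pos hv]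
      intro h
      have hadj : Y.Adj (Sum.inl ⟨u, hu⟩) (Sum.inr (φ v)) :=
        (hYvx ⟨u, hu⟩ (φ v)).mpr ⟨v, hv, huv, rfl⟩
      have hC : C (Sum.inl ⟨u, hu⟩) ≠ C (Sum.inr (φ v)) := C.valid hadj
      have h2 : σ (φ v) = C (Sum.inl ⟨u, hu⟩) := by rw [← h, Equiv.apply_symm_apply]
      exact hC h2.symm
    · simp only [dif_neg hu, dif_neg hv]
      intro h
      have hadj : Y.Adj (Sum.inl ⟨u, hu⟩) (Sum.inl ⟨v, hv⟩) :=
        (hYvv ⟨u, hu⟩ ⟨v, hv⟩).mpr huv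
      exact C.valid hadj (σ.symm.injective h)
  have := (SimpleGraph.chromaticNumber_le_iff_colorable (n := k - 1)).not.mpr key
  have hlt : (↑(k - 1) : ℕ∞) < Y.chromaticNumber := lt_of_not_ge this
  have : ((k - 1 : ℕ) : ℕ∞) + 1 ≤ Y.chromaticNumber := Order.add_one_le_of_lt hlt
  calc (k : ℕ∞) = ((k - 1 : ℕ) : ℕ∞) + 1 := by
        norm_cast
        omega
    _ ≤ Y.chromaticNumber := this
end

section
/- Let k ≥ 4. If f: ℕ → ℕ satisfies f(n + k − 1) ≤ f(n) + (k−2)(k+1)/2 for all n ≥ k+2, and f(n) ≥ ((k+1)(k−2)n − k(k−3)) / (2(k−1)) for all n ≥ k+2, then lim_{n→∞} f(n)/n exists and equals k/2 − 1/(k−1). -/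
open Filter

/-- If `f : ℕ → ℕ` satisfies the Hajós recursion
`f(n + k − 1) ≤ f(n) + (k−2)(k+1)/2` and the lower bound
`f(n) ≥ ((k+1)(k−2)n − k(k−3))/(2(k−1))` for all `n ≥ k + 2` (with `k ≥ 4`),
then `f(n)/n → k/2 − 1/(k−1)`. -/
theorem phi_k_limit (k : ℕ) (hk : 4 ≤ k) (f : ℕ → ℕ)
    (hupper : ∀ n, k + 2 ≤ n →
      (f (n + k - 1) : ℝ) ≤ (f n : ℝ) + ((k : ℝ) - 2) * ((k : ℝ) + 1) / 2)
    (hlower : ∀ n, k + 2 ≤ n →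
      (((k : ℝ) + 1) * ((k : ℝ) - 2) * (n : ℝ) - (k : ℝ) * ((k : ℝ) - 3)) /
          (2 * ((k : ℝ) - 1)) ≤ (f n : ℝ)) :
    Tendsto (fun n : ℕ => (f n : ℝ) / (n : ℝ)) atTop
      (nhds ((k : ℝ) / 2 - 1 / ((k : ℝ) - 1))) := by
  have hK4 : (4:ℝ) ≤ (k:ℝ) := by exact_mod_cast hk
  have hK1 : (0:ℝ) < (k:ℝ) - 1 := by linarith
  obtain ⟨L, hL⟩ : ∃ L : ℝ, L = (k:ℝ)/2 - 1/((k:ℝ)-1) := ⟨_, rfl⟩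
  rw [← hL]
  have hLpos : 0 ≤ L := by
    have h1 : 1/((k:ℝ)-1) ≤ 1 := by
      rw [div_le_one hK1]; linarith
    rw [hL]; linarith
  have hC : L * ((k:ℝ)-1) = ((k:ℝ)-2)*((k:ℝ)+1)/2 := by
    rw [hL]; field_simp; ring
  obtain ⟨M, hM⟩ : ∃ M : ℝ, M = ∑ r ∈ Finset.range (2*k+1), (f r : ℝ) := ⟨_, rfl⟩
  have hfM : ∀ r, r ≤ 2*k → (f r : ℝ) ≤ M := by
    intro r hr
    rw [hM]
    apply Finset.single_le_sum (f := fun i => (f i : ℝ))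
    · intro i _; positivity
    · simp only [Finset.mem_range]; omega
  have hub : ∀ N, k + 2 ≤ N → (f N : ℝ) ≤ M + L * N := by
    intro N
    induction N using Nat.strong_induction_on with
    | _ N ih =>
      intro hN
      by_cases h : N ≤ 2*k
      · have h1 := hfM N h
        have h2 : (0:ℝ) ≤ L * N := by positivity
        linarith
      · push_neg at h
        set n := N - (k-1) with hn
        have hn2 : k + 2 ≤ n := by omega
        have hNn : N = n + k - 1 := by omega
        have hlt : n < N := by omega
        have h1 := hupper n hn2
        rw [← hNn] at h1
        have h2 := ih n hlt hn2
        have hcast : (N:ℝ) = (n:ℝ) + ((k:ℝ) - 1) := by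
          have h' : N + 1 = n + k := by omega
          have := congrArg (Nat.cast : ℕ → ℝ) h'
          push_cast at this
          linarith
        rw [hcast, mul_add]
        linarith [hC]
  obtain ⟨A, hA⟩ : ∃ A : ℝ, A = (k:ℝ)*((k:ℝ)-3)/(2*((k:ℝ)-1)) := ⟨_, rfl⟩
  have hlowev : ∀ᶠ N : ℕ in atTop, L - A / N ≤ (f N : ℝ) / N := by
    filter_upwards [eventually_ge_atTop (k+2)] with N hN
    have hNpos : (0:ℝ) < (N:ℝ) := by
      have : 0 < N := by omega
      exact_mod_cast this
    rw [le_div_iff₀ hNpos]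
    have h1 := hlower N hN
    have heq : (L - A / (N:ℝ)) * N =
        (((k:ℝ) + 1) * ((k:ℝ) - 2) * (N:ℝ) - (k:ℝ) * ((k:ℝ) - 3)) /
          (2 * ((k:ℝ) - 1)) := by
      rw [hL, hA]; field_simp; ring
    linarith
  have hupev : ∀ᶠ N : ℕ in atTop, (f N : ℝ) / N ≤ L + M / N := by
    filter_upwards [eventually_ge_atTop (k+2)] with N hN
    have hNpos : (0:ℝ) < (N:ℝ) := by
      have : 0 < N := by omega
      exact_mod_cast this
    have h1 := hub N hN
    have heq' : (L + M / (N:ℝ)) * N = L * N + M := by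
      field_simp
    rw [div_le_iff₀ hNpos, heq']
    linarith
  have hdiv : ∀ c : ℝ, Tendsto (fun N : ℕ => c / (N:ℝ)) atTop (nhds 0) :=
    fun c => tendsto_const_nhds.div_atTop tendsto_natCast_atTop_atTop
  have hlim1 : Tendsto (fun N : ℕ => L - A / N) atTop (nhds L) := by
    simpa using tendsto_const_nhds.sub (hdiv A)
  have hlim2 : Tendsto (fun N : ℕ => L + M / N) atTop (nhds L) := by
    simpa using tendsto_const_nhds.add (hdiv M)
  exact tendsto_of_tendsto_of_tendsto_of_le_of_le' hlim1 hlim2 hlowev hupev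
end
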